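/- Fix integers d ≥ 1 and n ≥ 1. For g > 0 and ρ ∈ ℝ define the weight of Y ∈ W_n as Q_{g,ρ,n}(Y) = (∏_{x∈range(Y)} F_{g,ρ}(n_x(Y))) / (Σ_{Y'∈W_n} ∏_{x∈range(Y')} F_{g,ρ}(n_x(Y'))). Suppose ρ = ρ(g) is chosen so that α(g,ρ(g)) = (ρ(g)−1)/(2√g) → 0 as g → ∞. Then for every Y ∈ W_n, lim_{g→∞} Q_{g,ρ(g),n}(Y) = (∏_{x∈range(Y)} Γ(n_x(Y)/2)/(2Γ(n_x(Y)))) / (Σ_{Y'∈W_n} ∏_{x∈range(Y')} Γ(n_x(Y')/2)/(2Γ(n_x(Y')))), where Γ is the Gamma function. -/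

import Mathlib

/-!
Formalization of statements from "The strong interaction limit of
continuous-time weakly self-avoiding walk" by Brydges, Dahlqvist, Slade.

An `n`-step nearest-neighbour walk on `ℤ^d` starting at the origin is encoded
bijectively by its sequence of steps `s : Fin n → Fin d × Bool`, a step being a
coordinate direction together with a sign.
-/

open scoped BigOperators Topology
open Filter

namespace StrongInteraction

/-- The unit step in coordinate direction `e.1`, with sign `e.2`. -/
def stepVec (d : ℕ) (e : Fin d × Bool) : Fin d → ℤ :=
  fun i => if i = e.1 then (if e.2 then 1 else -1) else 0

/-- `walkPos s k` is the position `Y_k` of the walk started at the origin whose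
successive nearest-neighbour steps are given by `s`. -/
def walkPos {d n : ℕ} (s : Fin n → Fin d × Bool) (k : Fin (n + 1)) : Fin d → ℤ :=
  ∑ i ∈ Finset.univ.filter (fun i : Fin n => (i : ℕ) < (k : ℕ)), stepVec d (s i)

/-- `n_x(Y)`: the number of visits to `x` by the walk. -/
def visits {d n : ℕ} (s : Fin n → Fin d × Bool) (x : Fin d → ℤ) : ℕ :=
  (Finset.univ.filter (fun k : Fin (n + 1) => walkPos s k = x)).card

/-- The set of distinct vertices visited by the walk. -/
def walkRange {d n : ℕ} (s : Fin n → Fin d × Bool) : Finset (Fin d → ℤ) :=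
  Finset.image (walkPos s) Finset.univ

/-- A walk is self-avoiding when its positions are pairwise distinct. -/
def SelfAvoiding {d n : ℕ} (s : Fin n → Fin d × Bool) : Prop :=
  Function.Injective (walkPos s)

instance {d n : ℕ} (s : Fin n → Fin d × Bool) : Decidable (SelfAvoiding s) :=
  inferInstanceAs (Decidable (Function.Injective (walkPos s)))

/-- `c_n`: the number of `n`-step self-avoiding walks. -/
def csaw (d n : ℕ) : ℕ :=
  (Finset.univ.filter fun s : Fin n → Fin d × Bool => SelfAvoiding s).card


/-- `F_{g,ρ}(m) = ∫_0^∞ (s^{m-1}/(m-1)!) e^{-s - g s² + ρ s} ds`, the contribution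
of a vertex visited `m` times, obtained from the Gamma(m,1) density of the sum of
`m` independent Exp(1) holding times. -/
noncomputable def F (g ρ : ℝ) (m : ℕ) : ℝ :=
  ∫ t in Set.Ioi (0 : ℝ),
    (t ^ (m - 1) / (Nat.factorial (m - 1))) * Real.exp (-t - g * t ^ 2 + ρ * t)

/-- The quick-step probability weight `Q_{g,ρ,n}(Y)` of a walk. -/
noncomputable def Qweight (d n : ℕ) (g ρ : ℝ) (s : Fin n → Fin d × Bool) : ℝ :=
  (∏ x ∈ walkRange s, F g ρ (visits s x)) /
    ∑ s' : Fin n → Fin d × Bool, ∏ x ∈ walkRange s', F g ρ (visits s' x)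

/-!
Substituting `t = u / √g` in `F_{g,ρ}(m)` turns the exponent `-t - g t² + ρ t` into
`-u² + 2 α u` with `α = (ρ - 1) / (2 √g)` and produces a factor `(√g)⁻¹ ^ m`. Since the visit
numbers of every walk add up to `n + 1`, these factors contribute the same `(√g)⁻¹ ^ (n + 1)`
to every walk and cancel in `Q`. What remains depends on `g` only through `α`, continuously,
and at `α = 0` the vertex weight is `I_m(0) = Γ(m/2) / (2 Γ(m))`.
-/

open scoped Nat
open MeasureTheory

noncomputable def I (m : ℕ) (α : ℝ) : ℝ :=
  ∫ u in Set.Ioi (0 : ℝ), (u ^ (m - 1) / (m - 1)!) * Real.exp (-u ^ 2 + 2 * α * u)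

lemma F_eq_inv_sqrt_pow_mul_I {g : ℝ} (hg : 0 < g) (ρ : ℝ) {m : ℕ} (hm : 1 ≤ m) :
    F g ρ m = (√g)⁻¹ ^ m * I m ((ρ - 1) / (2 * √g)) := by
  set c := (√g)⁻¹
  have hc : 0 < c := inv_pos.mpr (Real.sqrt_pos.mpr hg)
  have hgc : g * c ^ 2 = 1 := by
    rw [inv_pow, Real.sq_sqrt hg.le, mul_inv_cancel₀ hg.ne']
  have hintegrand (u : ℝ) :
      (c * u) ^ (m - 1) / (m - 1)! * Real.exp (-(c * u) - g * (c * u) ^ 2 + ρ * (c * u))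
        = c ^ (m - 1) * (u ^ (m - 1) / (m - 1)! *
            Real.exp (-u ^ 2 + 2 * ((ρ - 1) / (2 * √g)) * u)) := by
    have hquad : g * (c * u) ^ 2 = u ^ 2 := by rw [mul_pow, ← mul_assoc, hgc, one_mul]
    rw [hquad, mul_pow]
    simp only [c]
    field_simp
    ring_nf
  have hsubst := integral_comp_mul_left_Ioi
    (fun t => (t ^ (m - 1) / (m - 1)!) * Real.exp (-t - g * t ^ 2 + ρ * t)) 0 hc
  simp only [mul_zero, smul_eq_mul, hintegrand, integral_const_mul] at hsubst
  rw [F, ← mul_inv_cancel_left₀ hc.ne' (∫ _ in _, _), ← hsubst, I, ← mul_assoc,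
    ← _root_.pow_succ', Nat.sub_add_cancel hm]

lemma I_zero {m : ℕ} (hm : 1 ≤ m) : I m 0 = Real.Gamma (m / 2) / (2 * Real.Gamma m) := by
  have hcast : ((m - 1 : ℕ) : ℝ) = m - 1 := by push_cast [Nat.cast_sub hm]; ring
  have hGamma : Real.Gamma m = (m - 1)! := by
    rw [← Real.Gamma_nat_eq_factorial, hcast, sub_add_cancel]
  have hintegrand : ∀ u ∈ Set.Ioi (0 : ℝ),
      u ^ (m - 1) / (m - 1)! * Real.exp (-u ^ 2 + 2 * 0 * u)
        = ((m - 1)! : ℝ)⁻¹ * (u ^ ((m - 1 : ℕ) : ℝ) * Real.exp (-u ^ (2 : ℝ))) := by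
    intro u _
    rw [Real.rpow_natCast, Real.rpow_two]
    ring_nf
  rw [I, setIntegral_congr_fun measurableSet_Ioi hintegrand,
    integral_const_mul, integral_rpow_mul_exp_neg_rpow two_pos
      (by rw [hcast]; linarith [(Nat.one_le_cast (α := ℝ)).mpr hm]), hcast, hGamma,
    sub_add_cancel]
  field_simp

lemma I_zero_pos {m : ℕ} (hm : 1 ≤ m) : 0 < I m 0 := by
  have hm' : (0 : ℝ) < m := by exact_mod_cast hm
  rw [I_zero hm]
  exact div_pos (Real.Gamma_pos_of_pos (by positivity)) (by positivity [Real.Gamma_pos_of_pos hm'])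

lemma continuous_I (m : ℕ) : Continuous (I m) := by
  refine continuous_iff_continuousAt.2 fun α₀ => ?_
  set R := |α₀| + 1
  have hdom : Integrable
      (fun u : ℝ => Real.exp (2 * R ^ 2) / (m - 1)! *
        (u ^ ((m - 1 : ℕ) : ℝ) * Real.exp (-(1 / 2) * u ^ 2)))
      (volume.restrict (Set.Ioi 0)) :=
    ((integrable_rpow_mul_exp_neg_mul_sq (by norm_num)
      (by linarith [(Nat.cast_nonneg (m - 1) : (0 : ℝ) ≤ _)])).restrict).const_mul _
  refine continuousAt_of_dominated
    (Eventually.of_forall fun α => (by fun_prop : Continuous fun u : ℝ =>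
      u ^ (m - 1) / (m - 1)! * Real.exp (-u ^ 2 + 2 * α * u)).aestronglyMeasurable)
    ?_ hdom (Eventually.of_forall fun u => by fun_prop)
  filter_upwards [Metric.ball_mem_nhds α₀ one_pos] with α hα
  refine (ae_restrict_iff' measurableSet_Ioi).2 (Eventually.of_forall fun u hu => ?_)
  have hu0 : (0 : ℝ) < u := hu
  have hαR : |α| ≤ R := by
    have := abs_sub_abs_le_abs_sub α α₀
    rw [Metric.mem_ball, Real.dist_eq] at hα
    linarith
  have hexp : -u ^ 2 + 2 * α * u ≤ 2 * R ^ 2 + -(1 / 2) * u ^ 2 := by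
    nlinarith [sq_nonneg (u - 2 * α), sq_abs α, abs_nonneg α]
  rw [Real.norm_eq_abs, abs_of_nonneg (by positivity),
    Real.rpow_natCast]
  calc u ^ (m - 1) / (m - 1)! * Real.exp (-u ^ 2 + 2 * α * u)
      ≤ u ^ (m - 1) / (m - 1)! * Real.exp (2 * R ^ 2 + -(1 / 2) * u ^ 2) := by
        gcongr
    _ = _ := by rw [Real.exp_add]; ring

section WalkWeight

variable {d n : ℕ}

noncomputable def walkWeight (w : ℕ → ℝ) (s : Fin n → Fin d × Bool) : ℝ :=
  ∏ x ∈ walkRange s, w (visits s x)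

lemma one_le_visits_of_mem_walkRange {s : Fin n → Fin d × Bool} {x : Fin d → ℤ}
    (hx : x ∈ walkRange s) : 1 ≤ visits s x := by
  obtain ⟨k, -, rfl⟩ := Finset.mem_image.1 hx
  exact Finset.card_pos.2 ⟨k, by simp⟩

lemma sum_visits_walkRange (s : Fin n → Fin d × Bool) :
    ∑ x ∈ walkRange s, visits s x = n + 1 := by
  have h := Finset.card_eq_sum_card_image (walkPos s) Finset.univ
  rw [Finset.card_univ, Fintype.card_fin] at h
  exact h.symm

lemma walkWeight_congr {w w' : ℕ → ℝ} (h : ∀ m, 1 ≤ m → w m = w' m)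
    (s : Fin n → Fin d × Bool) : walkWeight w s = walkWeight w' s :=
  Finset.prod_congr rfl fun _ hx => h _ (one_le_visits_of_mem_walkRange hx)

lemma walkWeight_pow_mul (c : ℝ) (w : ℕ → ℝ) (s : Fin n → Fin d × Bool) :
    walkWeight (fun m => c ^ m * w m) s = c ^ (n + 1) * walkWeight w s := by
  rw [walkWeight, Finset.prod_mul_distrib, Finset.prod_pow_eq_pow_sum, sum_visits_walkRange,
    walkWeight]

lemma walkWeight_pos {w : ℕ → ℝ} (h : ∀ m, 1 ≤ m → 0 < w m) (s : Fin n → Fin d × Bool) :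
    0 < walkWeight w s :=
  Finset.prod_pos fun _ hx => h _ (one_le_visits_of_mem_walkRange hx)

lemma tendsto_walkWeight {ι : Type*} {l : Filter ι} {w : ι → ℕ → ℝ} {w₀ : ℕ → ℝ}
    (h : ∀ m, Tendsto (fun i => w i m) l (𝓝 (w₀ m))) (s : Fin n → Fin d × Bool) :
    Tendsto (fun i => walkWeight (w i) s) l (𝓝 (walkWeight w₀ s)) :=
  tendsto_finsetProd _ fun _ _ => h _

end WalkWeight

lemma Qweight_eq_div_walkWeight_I {d n : ℕ} {g : ℝ} (hg : 0 < g) (ρ : ℝ)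
    (s : Fin n → Fin d × Bool) :
    Qweight d n g ρ s = walkWeight (fun m => I m ((ρ - 1) / (2 * √g))) s /
      ∑ s' : Fin n → Fin d × Bool, walkWeight (fun m => I m ((ρ - 1) / (2 * √g))) s' := by
  have hF (s' : Fin n → Fin d × Bool) : walkWeight (F g ρ) s'
      = (√g)⁻¹ ^ (n + 1) * walkWeight (fun m => I m ((ρ - 1) / (2 * √g))) s' := by
    rw [walkWeight_congr (fun m hm => F_eq_inv_sqrt_pow_mul_I hg ρ hm), walkWeight_pow_mul]
  have hc : (0 : ℝ) < (√g)⁻¹ ^ (n + 1) := by positivity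
  change walkWeight (F g ρ) s / ∑ s', walkWeight (F g ρ) s' = _
  simp only [hF, ← Finset.mul_sum, mul_div_mul_left _ _ hc.ne']

theorem quickstep_limit_a_zero_general (d n : ℕ) (hd : 1 ≤ d)
    (ρ : ℝ → ℝ)
    (hα : Tendsto (fun g : ℝ => (ρ g - 1) / (2 * Real.sqrt g)) atTop (𝓝 0))
    (s : Fin n → Fin d × Bool) :
    Tendsto (fun g : ℝ => Qweight d n g (ρ g) s) atTop
      (𝓝 ((∏ x ∈ walkRange s,
            Real.Gamma ((visits s x : ℝ) / 2) / (2 * Real.Gamma (visits s x))) /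
        ∑ s' : Fin n → Fin d × Bool,
          ∏ x ∈ walkRange s',
            Real.Gamma ((visits s' x : ℝ) / 2) / (2 * Real.Gamma (visits s' x)))) := by
  have : Nonempty (Fin n → Fin d × Bool) := ⟨fun _ => (⟨0, hd⟩, true)⟩
  have hI (m : ℕ) : Tendsto (fun g => I m ((ρ g - 1) / (2 * √g))) atTop (𝓝 (I m 0)) :=
    ((continuous_I m).tendsto 0).comp hα
  have hden : 0 < ∑ s', walkWeight (fun m => I m 0) (s' : Fin n → Fin d × Bool) :=
    Finset.sum_pos (fun s' _ => walkWeight_pos (fun _ => I_zero_pos) s') Finset.univ_nonempty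
  have hlim := (tendsto_walkWeight hI s).div
    (tendsto_finsetSum _ fun s' _ => tendsto_walkWeight hI s') hden.ne'
  simp only [walkWeight_congr (fun _ => I_zero)] at hlim
  exact hlim.congr' ((eventually_gt_atTop 0).mono fun g hg =>
    (Qweight_eq_div_walkWeight_I hg (ρ g) s).symm)

/-- if `α(g,ρ(g)) = (ρ(g)-1)/(2√g) → 0` as `g → ∞`, the
quick-step weights converge to the self-repelling measure with vertex weights
`Γ(n_x/2)/(2Γ(n_x))`. -/
theorem quickstep_limit_a_zero (d n : ℕ) (hd : 1 ≤ d) (hn : 1 ≤ n)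
    (ρ : ℝ → ℝ)
    (hα : Tendsto (fun g : ℝ => (ρ g - 1) / (2 * Real.sqrt g)) atTop (𝓝 0))
    (s : Fin n → Fin d × Bool) :
    Tendsto (fun g : ℝ => Qweight d n g (ρ g) s) atTop
      (𝓝 ((∏ x ∈ walkRange s,
            Real.Gamma ((visits s x : ℝ) / 2) / (2 * Real.Gamma (visits s x))) /
        ∑ s' : Fin n → Fin d × Bool,
          ∏ x ∈ walkRange s',
            Real.Gamma ((visits s' x : ℝ) / 2) / (2 * Real.Gamma (visits s' x)))) :=
  quickstep_limit_a_zero_general d n hd ρ hα s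

end StrongInteraction
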